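/- For the symmetric BAR kernel 𝒬(x,·) = 𝒩(ax, σ²) with a ∈ (−1,1), a ≠ 0, σ > 0, invariant measure μ = 𝒩(0, σ_a²) with σ_a² = σ²/(1−a²), and 𝔥(x) = (1−a⁴)^{-1/4} exp(a²(1−a²)x²/(2(1+a²)σ²)): for every k ≥ 1 there exists a finite constant C_k such that 𝒬^{k−1}𝔥(x) = C_k exp( a^{2k} x² / (2σ_a²(1+a^{2k})) ) for all x ∈ ℝ; consequently 𝔥_k := 𝒬^{k−1}𝔥 belongs to L⁶(μ) if and only if a^{2k} < 1/5. -/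

import Mathlib

open MeasureTheory ProbabilityTheory

/-- The symmetric BAR transition kernel `𝒬(x,·) = 𝒩(ax, σ²)` acting on functions. -/
noncomputable def barQfun (a σ : ℝ) (f : ℝ → ℝ) (x : ℝ) : ℝ :=
  ∫ y, f y ∂(gaussianReal (a * x) (Real.toNNReal (σ ^ 2)))

/-- The function `𝔥(x) = (1-a⁴)^{-1/4} exp(a²(1-a²)x²/(2(1+a²)σ²))` of the symmetric
BAR model (the `L²(μ)`-norm of the density `q(x,·)`). -/
noncomputable def barh (a σ : ℝ) (x : ℝ) : ℝ :=
  (1 - a ^ 4) ^ (-(1 : ℝ) / 4)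
    * Real.exp (a ^ 2 * (1 - a ^ 2) * x ^ 2 / (2 * (1 + a ^ 2) * σ ^ 2))

/-!
Completing the square in the Gaussian integral shows that the kernel maps `C · exp (c x²)`, for
`2cσ² < 1`, to a function of the same form with exponent `c a² / (1 - 2cσ²)`. Writing
`c = t (1 - a²) / (2σ²(1 + t))`, this recursion becomes `t ↦ a² t`, and `𝔥` is the case `t = a²`,
so `𝒬^{k-1}𝔥` has `t = a^{2k}`. Finally `exp (c x²)⁶` is `μ`-integrable iff `12 c σ_a² < 1`,
which for `t = a^{2k}` reads `6t/(1 + t) < 1`, i.e. `a^{2k} < 1/5`.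
-/

open Real
open scoped NNReal ENNReal

lemma gaussianPDFReal_mul_exp_mul_sq {V : ℝ≥0} (hV : V ≠ 0) {c : ℝ} (hc : 2 * c * V < 1)
    (m y : ℝ) :
    gaussianPDFReal m V y * exp (c * y ^ 2)
      = (√(1 - 2 * c * V))⁻¹ * exp (c * m ^ 2 / (1 - 2 * c * V))
        * gaussianPDFReal (m / (1 - 2 * c * V)) (V / (1 - 2 * c * V)).toNNReal y := by
  have hd : 0 < 1 - 2 * c * V := by linarith
  have hd' : 0 < 1 - 2 * V * c := by linarith
  have hsquare : -(y - m) ^ 2 / (2 * V) + c * y ^ 2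
      = c * m ^ 2 / (1 - 2 * c * V) + -(y - m / (1 - 2 * c * V)) ^ 2
          / (2 * (V / (1 - 2 * c * V))) := by
    field_simp [hd'.ne']
    ring
  rw [gaussianPDFReal, gaussianPDFReal, Real.coe_toNNReal _ (by positivity), mul_assoc,
    ← exp_add, hsquare, exp_add, ← mul_div_assoc (2 * π), Real.sqrt_div' _ hd.le]
  field_simp [(sqrt_pos.2 hd').ne']

lemma integral_exp_mul_sq_gaussianReal (m : ℝ) {V : ℝ≥0} {c : ℝ} (hc : 2 * c * V < 1) :
    ∫ y, exp (c * y ^ 2) ∂(gaussianReal m V)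
      = (√(1 - 2 * c * V))⁻¹ * exp (c * m ^ 2 / (1 - 2 * c * V)) := by
  rcases eq_or_ne V 0 with rfl | hV
  · simp
  have hd : 0 < 1 - 2 * c * V := by linarith
  have hV' : (V / (1 - 2 * c * V)).toNNReal ≠ 0 := by
    simpa using div_pos (by positivity : (0 : ℝ) < V) hd
  simp_rw [integral_gaussianReal_eq_integral_smul hV, smul_eq_mul,
    gaussianPDFReal_mul_exp_mul_sq hV hc, integral_const_mul, integral_gaussianPDFReal_eq_one _ hV',
    mul_one]

lemma integrable_exp_mul_sq_gaussianReal_iff {V : ℝ≥0} (hV : V ≠ 0) (c : ℝ) :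
    Integrable (fun x ↦ exp (c * x ^ 2)) (gaussianReal 0 V) ↔ 2 * c * V < 1 := by
  rw [gaussianReal_of_var_ne_zero _ hV, gaussianPDF_def,
    integrable_withDensity_iff_integrable_smul' (by fun_prop) (by simp)]
  have hdensity : (fun x ↦ (ENNReal.ofReal (gaussianPDFReal 0 V x)).toReal • exp (c * x ^ 2))
      = fun x ↦ (√(2 * π * V))⁻¹ * exp (-(1 / (2 * V) - c) * x ^ 2) := by
    funext x
    rw [ENNReal.toReal_ofReal (gaussianPDFReal_nonneg _ _ _), smul_eq_mul, gaussianPDFReal,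
      mul_assoc, ← exp_add]
    congr 2
    field_simp
    ring
  rw [hdensity, integrable_const_mul_iff (isUnit_iff_ne_zero.2 (by positivity)),
    integrable_exp_neg_mul_sq_iff, sub_pos, lt_div_iff₀ (by positivity)]
  constructor <;> intro h <;> linarith

lemma memLp_const_mul_exp_mul_sq_gaussianReal_iff {V : ℝ≥0} (hV : V ≠ 0) {C : ℝ} (hC : C ≠ 0)
    (c : ℝ) {p : ℝ≥0∞} (hp₀ : p ≠ 0) (hp : p ≠ ∞) :
    MemLp (fun x ↦ C * exp (c * x ^ 2)) p (gaussianReal 0 V) ↔ 2 * (p.toReal * c) * V < 1 := by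
  rw [← integrable_norm_rpow_iff (by fun_prop) hp₀ hp,
    ← integrable_exp_mul_sq_gaussianReal_iff hV]
  have hnorm : (fun x ↦ ‖C * exp (c * x ^ 2)‖ ^ p.toReal)
      = fun x ↦ |C| ^ p.toReal * exp (p.toReal * c * x ^ 2) := by
    funext x
    rw [norm_mul, norm_of_nonneg (exp_pos _).le, Real.norm_eq_abs,
      mul_rpow (abs_nonneg _) (exp_pos _).le, ← exp_mul]
    ring_nf
  rw [hnorm, integrable_const_mul_iff (isUnit_iff_ne_zero.2 (by positivity))]

lemma barQfun_const_mul_exp_mul_sq (a : ℝ) {σ c : ℝ} (hc : 2 * c * σ ^ 2 < 1) (C x : ℝ) :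
    barQfun a σ (fun y ↦ C * exp (c * y ^ 2)) x
      = C * (√(1 - 2 * c * σ ^ 2))⁻¹ * exp (c * a ^ 2 / (1 - 2 * c * σ ^ 2) * x ^ 2) := by
  have hvar : ((σ ^ 2).toNNReal : ℝ) = σ ^ 2 := Real.coe_toNNReal _ (sq_nonneg σ)
  rw [barQfun, integral_const_mul, integral_exp_mul_sq_gaussianReal _ (by rwa [hvar]), hvar]
  ring_nf

noncomputable def barExponent (a σ t : ℝ) : ℝ := t * (1 - a ^ 2) / (2 * σ ^ 2 * (1 + t))

section barExponent

variable {a σ t : ℝ}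

lemma one_sub_two_mul_barExponent_mul_sq (hσ : σ ≠ 0) (ht : 0 ≤ t) :
    1 - 2 * barExponent a σ t * σ ^ 2 = (1 + a ^ 2 * t) / (1 + t) := by
  unfold barExponent
  field_simp
  ring

lemma two_mul_barExponent_mul_sq_lt_one (hσ : σ ≠ 0) (ht : 0 ≤ t) :
    2 * barExponent a σ t * σ ^ 2 < 1 := by
  have h := one_sub_two_mul_barExponent_mul_sq (a := a) hσ ht
  have : 0 < (1 + a ^ 2 * t) / (1 + t) := by positivity
  linarith

lemma barExponent_mul_sq_div (hσ : σ ≠ 0) (ht : 0 ≤ t) :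
    barExponent a σ t * a ^ 2 / (1 - 2 * barExponent a σ t * σ ^ 2)
      = barExponent a σ (a ^ 2 * t) := by
  rw [one_sub_two_mul_barExponent_mul_sq hσ ht]
  unfold barExponent
  have : 0 < 1 + a ^ 2 * t := by positivity
  field_simp

end barExponent

lemma barQfun_iterate_const_mul_exp_barExponent (a : ℝ) {σ : ℝ} (hσ : σ ≠ 0) {t : ℝ}
    (ht : 0 ≤ t) {C : ℝ} (hC : 0 < C) (n : ℕ) :
    ∃ C' : ℝ, 0 < C' ∧ (barQfun a σ)^[n] (fun y ↦ C * exp (barExponent a σ t * y ^ 2))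
      = fun x ↦ C' * exp (barExponent a σ (a ^ (2 * n) * t) * x ^ 2) := by
  induction n with
  | zero => exact ⟨C, hC, by simp⟩
  | succ n ih =>
    obtain ⟨C', hC', h⟩ := ih
    have htn : 0 ≤ a ^ (2 * n) * t := mul_nonneg ((even_two_mul n).pow_nonneg a) ht
    have hlt := two_mul_barExponent_mul_sq_lt_one (a := a) hσ htn
    refine ⟨C' * (√(1 - 2 * barExponent a σ (a ^ (2 * n) * t) * σ ^ 2))⁻¹, by
      have := sqrt_pos.2 (sub_pos.2 hlt); positivity, ?_⟩
    funext x
    rw [Function.iterate_succ_apply', h, barQfun_const_mul_exp_mul_sq a hlt,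
      barExponent_mul_sq_div hσ htn]
    ring_nf

lemma barh_eq (a σ : ℝ) :
    barh a σ = fun y ↦ (1 - a ^ 4) ^ (-(1 : ℝ) / 4) * exp (barExponent a σ (a ^ 2) * y ^ 2) := by
  funext y
  rw [barh, barExponent]
  ring_nf

theorem barh_iterate_formula_general (a σ : ℝ) (ha : a ∈ Set.Ioo (-1 : ℝ) 1)
    (hσ : 0 < σ) (k : ℕ) (hk : 1 ≤ k) :
    ∃ C : ℝ, 0 < C ∧
      (∀ x : ℝ,
        (barQfun a σ)^[k - 1] (barh a σ) x
          = C * Real.exp (a ^ (2 * k) * x ^ 2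
              / (2 * (σ ^ 2 / (1 - a ^ 2)) * (1 + a ^ (2 * k)))))
      ∧ (MemLp ((barQfun a σ)^[k - 1] (barh a σ)) 6
            (gaussianReal 0 (Real.toNNReal (σ ^ 2 / (1 - a ^ 2))))
          ↔ a ^ (2 * k) < 1 / 5) := by
  have ha2 : a ^ 2 < 1 := (sq_lt_one_iff_abs_lt_one a).2 (abs_lt.2 ha)
  have hbarh_const : 0 < (1 - a ^ 4) ^ (-(1 : ℝ) / 4) := rpow_pos_of_pos (by nlinarith) _
  obtain ⟨C, hC, hiter⟩ := barQfun_iterate_const_mul_exp_barExponent a hσ.ne' (sq_nonneg a)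
    hbarh_const (k - 1)
  have hpow : a ^ (2 * (k - 1)) * a ^ 2 = a ^ (2 * k) := by
    rw [← pow_add]; congr 1; omega
  rw [← barh_eq, hpow] at hiter
  have h1a : 0 < 1 - a ^ 2 := by linarith
  have hexponent (x : ℝ) : barExponent a σ (a ^ (2 * k)) * x ^ 2
      = a ^ (2 * k) * x ^ 2 / (2 * (σ ^ 2 / (1 - a ^ 2)) * (1 + a ^ (2 * k))) := by
    unfold barExponent
    field_simp [h1a.ne']
  have hvar_pos : 0 < σ ^ 2 / (1 - a ^ 2) := by positivity
  have hμ : ((σ ^ 2 / (1 - a ^ 2)).toNNReal : ℝ) = σ ^ 2 / (1 - a ^ 2) :=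
    Real.coe_toNNReal _ hvar_pos.le
  refine ⟨C, hC, fun x ↦ by rw [hiter, ← hexponent], ?_⟩
  rw [hiter, memLp_const_mul_exp_mul_sq_gaussianReal_iff (Real.toNNReal_pos.2 hvar_pos).ne' hC.ne' _
    (by norm_num) (by norm_num), hμ]
  have hscaled : 2 * (6 * barExponent a σ (a ^ (2 * k))) * (σ ^ 2 / (1 - a ^ 2))
      = 6 * a ^ (2 * k) / (1 + a ^ (2 * k)) := by
    unfold barExponent
    field_simp [h1a.ne']
  have ht : 0 ≤ a ^ (2 * k) := (even_two_mul k).pow_nonneg a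
  rw [ENNReal.toReal_ofNat, hscaled, div_lt_one (by positivity)]
  constructor <;> intro <;> linarith

/-- For the symmetric BAR model with `a ∈ (-1,1)`, `a ≠ 0`, `σ > 0`: for every `k ≥ 1`
there is a finite constant `C_k` with
`𝒬^{k-1}𝔥(x) = C_k exp(a^{2k} x²/(2σ_a²(1+a^{2k})))` for all `x`, where
`σ_a² = σ²/(1-a²)`; consequently `𝔥_k := 𝒬^{k-1}𝔥 ∈ L⁶(μ)` iff `a^{2k} < 1/5`. -/
theorem barh_iterate_formula (a σ : ℝ) (ha : a ∈ Set.Ioo (-1 : ℝ) 1) (ha0 : a ≠ 0)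
    (hσ : 0 < σ) (k : ℕ) (hk : 1 ≤ k) :
    ∃ C : ℝ, 0 < C ∧
      (∀ x : ℝ,
        (barQfun a σ)^[k - 1] (barh a σ) x
          = C * Real.exp (a ^ (2 * k) * x ^ 2
              / (2 * (σ ^ 2 / (1 - a ^ 2)) * (1 + a ^ (2 * k)))))
      ∧ (MemLp ((barQfun a σ)^[k - 1] (barh a σ)) 6
            (gaussianReal 0 (Real.toNNReal (σ ^ 2 / (1 - a ^ 2))))
          ↔ a ^ (2 * k) < 1 / 5) :=
  barh_iterate_formula_general a σ ha hσ k hk
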